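/- arXiv:1706.06368 — 3 statements merged into one kernel-verified Lean document; each statement's English description precedes it below -/
import Mathlib

section
/- For a ranking constructed greedily as in the FA*IR algorithm—at each position, if the number of protected elements so far is below the required minimum m[i], pick the best remaining protected candidate, otherwise pick the best remaining candidate overall—every prefix of length i of the resulting ranking contains at least m[i] protected elements, provided m[i] - m[i-1] ≤ 1 for all i and there are at least m[k] protected candidates available. -/
/-- Number of protected elements among the first `i` positions of ranking `τ`. -/
def pc {n k : ℕ} (g : Fin n → Bool) (τ : Fin k → Fin n) (i : ℕ) : ℕ :=
  (Finset.univ.filter fun j : Fin k => (j : ℕ) < i ∧ g (τ j) = true).card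

lemma pc_mono {n k : ℕ} (g : Fin n → Bool) (τ : Fin k → Fin n) {i j : ℕ} (h : i ≤ j) :
    pc g τ i ≤ pc g τ j := by
  apply Finset.card_le_card
  intro x hx
  simp only [Finset.mem_filter] at *
  exact ⟨hx.1, lt_of_lt_of_le hx.2.1 h, hx.2.2⟩

lemma pc_succ_of_true {n k : ℕ} (g : Fin n → Bool) (τ : Fin k → Fin n) (i : Fin k)
    (h : g (τ i) = true) : pc g τ (i : ℕ) + 1 ≤ pc g τ ((i : ℕ) + 1) := by
  have hsub : insert i (Finset.univ.filter fun j : Fin k => (j : ℕ) < (i : ℕ) ∧ g (τ j) = true)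
      ⊆ Finset.univ.filter fun j : Fin k => (j : ℕ) < (i : ℕ) + 1 ∧ g (τ j) = true := by
    intro x hx
    simp only [Finset.mem_insert, Finset.mem_filter, Finset.mem_univ, true_and] at *
    rcases hx with rfl | hx
    · exact ⟨Nat.lt_succ_self _, h⟩
    · exact ⟨Nat.lt_succ_of_lt hx.1, hx.2⟩
  have hnot : i ∉ Finset.univ.filter fun j : Fin k => (j : ℕ) < (i : ℕ) ∧ g (τ j) = true := by
    simp
  have := Finset.card_le_card hsub
  rw [Finset.card_insert_of_notMem hnot] at this
  simp only [pc]
  omega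

/-- a ranking constructed greedily as in FA*IR (at each position,
if the protected count so far is below m[i+1], pick the best remaining protected
candidate, otherwise the best remaining candidate overall) has at least m[i]
protected elements in every prefix of length i, provided m has unit increments,
m 0 = 0, and there are at least m[k] protected candidates. -/
theorem stmt2 {n k : ℕ} (q : Fin n → ℝ) (hq : Function.Injective q)
    (g : Fin n → Bool) (m : ℕ → ℕ)
    (hm0 : m 0 = 0) (hmono : Monotone m) (hstep : ∀ i, m (i + 1) ≤ m i + 1)
    (hkn : k ≤ n)
    (hprot : m k ≤ (Finset.univ.filter fun c : Fin n => g c = true).card)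
    (τ : Fin k → Fin n) (hinj : Function.Injective τ)
    (hgreedy : ∀ i : Fin k,
      (pc g τ (i : ℕ) < m ((i : ℕ) + 1) →
        g (τ i) = true ∧
        ∀ c : Fin n, g c = true → (∀ j : Fin k, j < i → τ j ≠ c) → q c ≤ q (τ i)) ∧
      (m ((i : ℕ) + 1) ≤ pc g τ (i : ℕ) →
        ∀ c : Fin n, (∀ j : Fin k, j < i → τ j ≠ c) → q c ≤ q (τ i))) :
    ∀ i : ℕ, i ≤ k → m i ≤ pc g τ i := by
  intro i
  induction i with
  | zero => intro _; simp [hm0]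
  | succ i ih =>
    intro hik
    have hik' : i < k := hik
    have ihm : m i ≤ pc g τ i := ih (Nat.le_of_lt hik')
    set fi : Fin k := ⟨i, hik'⟩ with hfi
    by_cases h : pc g τ i < m (i + 1)
    · have hg : g (τ fi) = true := ((hgreedy fi).1 h).1
      calc m (i + 1) ≤ m i + 1 := hstep i
        _ ≤ pc g τ i + 1 := by omega
        _ ≤ pc g τ (i + 1) := pc_succ_of_true g τ fi hg
    · exact le_trans (Nat.le_of_not_lt h) (pc_mono g τ (Nat.le_succ i))
end

section
/- The ranking produced by the FA*IR greedy procedure satisfies in-group monotonicity: within the protected group and within the non-protected group separately, elements appear in order of strictly decreasing quality. -/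
/-- the ranking produced by the FA*IR greedy procedure satisfies
in-group monotonicity: within the protected group and within the non-protected
group separately, elements appear in order of strictly decreasing quality. -/
theorem stmt3 {n k : ℕ} (q : Fin n → ℝ) (hq : Function.Injective q)
    (g : Fin n → Bool) (m : ℕ → ℕ)
    (hm0 : m 0 = 0) (hmono : Monotone m) (hstep : ∀ i, m (i + 1) ≤ m i + 1)
    (τ : Fin k → Fin n) (hinj : Function.Injective τ)
    (hgreedy : ∀ i : Fin k,
      (pc g τ (i : ℕ) < m ((i : ℕ) + 1) →
        g (τ i) = true ∧
        ∀ c : Fin n, g c = true → (∀ j : Fin k, j < i → τ j ≠ c) → q c ≤ q (τ i)) ∧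
      (m ((i : ℕ) + 1) ≤ pc g τ (i : ℕ) →
        ∀ c : Fin n, (∀ j : Fin k, j < i → τ j ≠ c) → q c ≤ q (τ i))) :
    ∀ i j : Fin k, i < j → g (τ i) = g (τ j) → q (τ j) < q (τ i) := by
  intro i j hij hg
  have havail : ∀ j' : Fin k, j' < i → τ j' ≠ τ j := by
    intro j' hj' h
    exact absurd (hinj h) (ne_of_lt (lt_trans hj' hij))
  have hne : q (τ j) ≠ q (τ i) := fun h => (ne_of_lt hij) (hinj (hq h.symm))
  rcases lt_or_ge (pc g τ (i : ℕ)) (m ((i : ℕ) + 1)) with hc | hc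
  · obtain ⟨hgi, hbest⟩ := (hgreedy i).1 hc
    exact lt_of_le_of_ne (hbest (τ j) (hg ▸ hgi) havail) hne
  · exact lt_of_le_of_ne ((hgreedy i).2 hc (τ j) havail) hne
end

section
/- Let F(x; k, p) denote the CDF of the binomial distribution with parameters k and p, and fix a significance level α ∈ (0,1). Define m_{α,p}(k) to be the smallest nonnegative integer x such that F(x; k, p) > α. Then the function k ↦ m_{α,p}(k) is non-decreasing in k, and increases by at most 1 when k increases by 1. -/
/-- Binomial CDF: `F(x; k, p) = ∑_{j=0}^{x} C(k,j) p^j (1-p)^{k-j}`. -/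
noncomputable def binomCDF (k : ℕ) (p : ℝ) (x : ℕ) : ℝ :=
  ∑ j ∈ Finset.range (x + 1), (k.choose j : ℝ) * p ^ j * (1 - p) ^ (k - j)

/-- `m_{α,p}(k)`: smallest nonnegative integer x with `F(x; k, p) > α`. -/
noncomputable def mReq (α p : ℝ) (k : ℕ) : ℕ :=
  sInf {x : ℕ | α < binomCDF k p x}

lemma binomCDF_self (k : ℕ) (p : ℝ) : binomCDF k p k = 1 := by
  have h : p + (1 - p) = 1 := by ring
  calc binomCDF k p k = (p + (1 - p)) ^ k := by
        rw [add_pow]; apply Finset.sum_congr rfl; intro j _; ring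
    _ = 1 := by rw [h, one_pow]

lemma binomCDF_succ_eq (p : ℝ) (k : ℕ) (x : ℕ) :
    binomCDF (k + 1) p x =
      binomCDF k p x - (k.choose x : ℝ) * p ^ (x + 1) * (1 - p) ^ (k - x) := by
  induction x with
  | zero =>
    rw [binomCDF, binomCDF, Finset.sum_range_one, Finset.sum_range_one]
    simp only [Nat.choose_zero_right, Nat.cast_one, pow_zero, Nat.sub_zero, pow_succ]
    ring
  | succ x ih =>
    have h1 : binomCDF (k + 1) p (x + 1) =
        binomCDF (k + 1) p x + ((k + 1).choose (x + 1) : ℝ) * p ^ (x + 1) * (1 - p) ^ (k - x) := by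
      rw [binomCDF, binomCDF, Finset.sum_range_succ, Nat.succ_sub_succ]
    have h2 : binomCDF k p (x + 1) =
        binomCDF k p x + (k.choose (x + 1) : ℝ) * p ^ (x + 1) * (1 - p) ^ (k - (x + 1)) := by
      rw [binomCDF, binomCDF, Finset.sum_range_succ]
    have hpas : (((k + 1).choose (x + 1) : ℕ) : ℝ) = (k.choose x : ℝ) + (k.choose (x + 1) : ℝ) := by
      rw [Nat.choose_succ_succ]; push_cast; ring
    rw [h1, ih, h2, hpas]
    rcases le_or_gt (x + 1) k with h | h
    · have hk : k - x = (k - (x + 1)) + 1 := by omega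
      rw [hk, pow_succ]
      ring
    · have hz : k.choose (x + 1) = 0 := Nat.choose_eq_zero_of_lt h
      rw [hz]
      push_cast
      ring

lemma cdf_anti (p : ℝ) (hp0 : 0 ≤ p) (hp1 : p ≤ 1) (k x : ℕ) :
    binomCDF (k + 1) p x ≤ binomCDF k p x := by
  rw [binomCDF_succ_eq]
  have h : 0 ≤ (k.choose x : ℝ) * p ^ (x + 1) * (1 - p) ^ (k - x) :=
    mul_nonneg (mul_nonneg (Nat.cast_nonneg _) (pow_nonneg hp0 _))
      (pow_nonneg (by linarith) _)
  linarith

lemma cdf_step (p : ℝ) (hp0 : 0 ≤ p) (hp1 : p ≤ 1) (k x : ℕ) :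
    binomCDF k p x ≤ binomCDF (k + 1) p (x + 1) := by
  have h1 : binomCDF (k + 1) p (x + 1) =
      binomCDF (k + 1) p x + ((k + 1).choose (x + 1) : ℝ) * p ^ (x + 1) * (1 - p) ^ (k - x) := by
    rw [binomCDF, binomCDF, Finset.sum_range_succ, Nat.succ_sub_succ]
  have hpas : (((k + 1).choose (x + 1) : ℕ) : ℝ) = (k.choose x : ℝ) + (k.choose (x + 1) : ℝ) := by
    rw [Nat.choose_succ_succ]; push_cast; ring
  rw [h1, binomCDF_succ_eq, hpas]
  have h : 0 ≤ (k.choose (x + 1) : ℝ) * p ^ (x + 1) * (1 - p) ^ (k - x) :=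
    mul_nonneg (mul_nonneg (Nat.cast_nonneg _) (pow_nonneg hp0 _))
      (pow_nonneg (by linarith) _)
  nlinarith [h]

/-- `k ↦ m_{α,p}(k)` is non-decreasing in k and increases by at
most 1 when k increases by 1. -/
theorem stmt5 (p α : ℝ) (hp : p ∈ Set.Ioo (0 : ℝ) 1) (hα : α ∈ Set.Ioo (0 : ℝ) 1) :
    ∀ k : ℕ, mReq α p k ≤ mReq α p (k + 1) ∧ mReq α p (k + 1) ≤ mReq α p k + 1 := by
  obtain ⟨hp0, hp1⟩ := hp
  obtain ⟨hα0, hα1⟩ := hα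
  intro k
  have hmem : ∀ n : ℕ, n ∈ {x : ℕ | α < binomCDF n p x} := by
    intro n
    simp only [Set.mem_setOf_eq, binomCDF_self]
    exact hα1
  constructor
  · have hne : {x : ℕ | α < binomCDF (k + 1) p x}.Nonempty := ⟨k + 1, hmem (k + 1)⟩
    have hm := Nat.sInf_mem hne
    simp only [Set.mem_setOf_eq] at hm
    apply Nat.sInf_le
    exact lt_of_lt_of_le hm (cdf_anti p hp0.le hp1.le k _)
  · have hne : {x : ℕ | α < binomCDF k p x}.Nonempty := ⟨k, hmem k⟩
    have hm := Nat.sInf_mem hne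
    simp only [Set.mem_setOf_eq] at hm
    apply Nat.sInf_le
    exact lt_of_lt_of_le hm (cdf_step p hp0.le hp1.le k _)
end
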